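/- Let γ ∈ ℝ and m ∈ ℝ³ with ‖m‖ < 1, and assume |γ| ≤ 1 - ‖m‖. Then the biased qubit effect E_± = ((1 ± γ)I ± m·σ)/2 decomposes as E_± = ‖m‖·M_± + (1-‖m‖)·R_±, where M_± = (I ± m̂·σ)/2 with m̂ = m/‖m‖ is a projective measurement and R_± = q_± I with q_± = (1 ± γ - ‖m‖)/(2(1-‖m‖)) satisfies q_± ≥ 0 and q_+ + q_- = 1. -/

import Mathlib

open scoped Matrix ComplexOrder

/-- The three Pauli matrices `σ_x, σ_y, σ_z`. -/
noncomputable def pauli : Fin 3 → Matrix (Fin 2) (Fin 2) ℂ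
  | 0 => !![0, 1; 1, 0]
  | 1 => !![0, -Complex.I; Complex.I, 0]
  | 2 => !![1, 0; 0, -1]

/-- The Pauli combination `w·σ` of a real 3-vector. -/
noncomputable def pauliDot (w : EuclideanSpace ℝ (Fin 3)) : Matrix (Fin 2) (Fin 2) ℂ :=
  ∑ i : Fin 3, (w i : ℂ) • pauli i

lemma pauliDot_eq (w : EuclideanSpace ℝ (Fin 3)) :
    pauliDot w = !![(w 2 : ℂ), w 0 - w 1 * Complex.I; w 0 + w 1 * Complex.I, -w 2] := by
  simp [pauliDot, Fin.sum_univ_three, pauli]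
  ring

lemma pauliDot_smul (c : ℝ) (w : EuclideanSpace ℝ (Fin 3)) :
    pauliDot (c • w) = (c : ℂ) • pauliDot w := by
  simp only [pauliDot, Finset.smul_sum, smul_smul]
  refine Finset.sum_congr rfl fun i _ => ?_
  have : (c • w) i = c * w i := rfl
  rw [this]; push_cast; ring_nf

lemma norm_sq_eq (w : EuclideanSpace ℝ (Fin 3)) :
    ‖w‖ ^ 2 = w 0 ^ 2 + w 1 ^ 2 + w 2 ^ 2 := by
  rw [← real_inner_self_eq_norm_sq]
  simp only [PiLp.inner_apply, Fin.sum_univ_three, RCLike.inner_apply, conj_trivial]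
  ring

lemma pauliDot_mul_self (w : EuclideanSpace ℝ (Fin 3)) :
    pauliDot w * pauliDot w = ((‖w‖ ^ 2 : ℝ) : ℂ) • 1 := by
  rw [pauliDot_eq, norm_sq_eq]
  ext i j
  fin_cases i <;> fin_cases j <;>
    simp [Matrix.mul_apply, Fin.sum_univ_two, Matrix.one_apply, Complex.ext_iff] <;> ring_nf <;>
    simp [Complex.I_sq, Complex.ext_iff, ← Complex.ofReal_pow] <;> ring

/-- A biased binary qubit measurement `E_± = ((1±γ)I ± m·σ)/2` (with `m ≠ 0`,
`‖m‖ < 1`, `|γ| ≤ 1-‖m‖`) decomposes as `E_± = ‖m‖·M_± + (1-‖m‖)·R_±`, where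
`M_± = (I ± m̂·σ)/2` is projective and `R_± = q_± I` with
`q_± = (1 ± γ - ‖m‖)/(2(1-‖m‖))`, `q_± ≥ 0`, `q_+ + q_- = 1`. -/
theorem biased_qubit_measurement_decomposition
    (γ : ℝ) (m : EuclideanSpace ℝ (Fin 3)) (hm0 : m ≠ 0) (hm1 : ‖m‖ < 1)
    (hγ : |γ| ≤ 1 - ‖m‖)
    (E M R : Bool → Matrix (Fin 2) (Fin 2) ℂ) (q : Bool → ℝ)
    (hE : ∀ s, E s = (1 / 2 : ℂ) •
        ((((1 + (if s then 1 else -1) * γ : ℝ)) : ℂ) • (1 : Matrix (Fin 2) (Fin 2) ℂ)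
          + (if s then 1 else -1 : ℂ) • pauliDot m))
    (hM : ∀ s, M s = (1 / 2 : ℂ) •
        ((1 : Matrix (Fin 2) (Fin 2) ℂ)
          + (if s then 1 else -1 : ℂ) • pauliDot (‖m‖⁻¹ • m)))
    (hq : ∀ s, q s = (1 + (if s then 1 else -1) * γ - ‖m‖) / (2 * (1 - ‖m‖)))
    (hR : ∀ s, R s = ((q s : ℝ) : ℂ) • (1 : Matrix (Fin 2) (Fin 2) ℂ)) :
    (∀ s, M s * M s = M s) ∧
    (∀ s, E s = ((‖m‖ : ℝ) : ℂ) • M s + (((1 - ‖m‖ : ℝ)) : ℂ) • R s) ∧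
    (∀ s, 0 ≤ q s) ∧
    q true + q false = 1 := by
  have ha0 : (0:ℝ) < ‖m‖ := norm_pos_iff.mpr hm0
  have h1a : (0:ℝ) < 1 - ‖m‖ := by linarith
  have hγ' := abs_le.mp hγ
  have hA : ((‖m‖ : ℝ) : ℂ) ≠ 0 := by exact_mod_cast ne_of_gt ha0
  have hB : (1:ℂ) - (‖m‖ : ℝ) ≠ 0 := by
    have : ((1 - ‖m‖ : ℝ) : ℂ) ≠ 0 := by exact_mod_cast ne_of_gt h1a
    push_cast at this; exact this
  refine ⟨?_, ?_, ?_, ?_⟩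
  · intro s
    have hnorm : ‖(‖m‖⁻¹ • m : EuclideanSpace ℝ (Fin 3))‖ = 1 := by
      rw [norm_smul, Real.norm_eq_abs, abs_of_pos (inv_pos.mpr ha0)]
      field_simp
    have hP : pauliDot (‖m‖⁻¹ • m) * pauliDot (‖m‖⁻¹ • m) = 1 := by
      rw [pauliDot_mul_self, hnorm]; simp
    rw [hM s]
    cases s <;> simp only [Bool.false_eq_true, reduceIte] <;>
      simp only [Matrix.smul_mul, Matrix.mul_smul, smul_smul, add_mul, mul_add,
        one_mul, mul_one, hP] <;> module
  · intro s
    rw [hE s, hM s, hR s, pauliDot_smul, hq s]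
    cases s <;> simp only [Bool.false_eq_true, reduceIte] <;>
      match_scalars <;> push_cast <;> field_simp <;> ring
  · intro s
    rw [hq s]
    apply div_nonneg _ (by linarith)
    cases s <;> simp <;> linarith
  · rw [hq true, hq false]
    field_simp
    simp only [Bool.false_eq_true, ↓reduceIte]
    ring
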